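/- Let V be a maximal isotropic subspace with respect to ω, and let ψ₀ be a stabilizer state for V. Then for any two syndrome spinor labels (c,d) and (e,f), the syndrome states are orthogonal, ⟪σ(c,d).mulVec ψ₀, σ(e,f).mulVec ψ₀⟫ = 0, if and only if (c,d) and (e,f) lie in distinct cosets of V, i.e. (c+e, d+f) ∉ V. (Paper's main Theorem: two syndrome states are orthogonal iff the coset subspaces containing their syndrome spinors are distinguishable.) -/

import Mathlib

open Matrix BigOperators

/-- The mod-2 dot product of two bitstrings. -/
def dotp {p : ℕ} (a b : Fin p → ZMod 2) : ZMod 2 := ∑ i, a i * b i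

/-- The sign `(-1)^t` for `t : ZMod 2`. -/
noncomputable def sgn (t : ZMod 2) : ℂ := (-1 : ℂ) ^ t.val

/-- The Pauli spinor matrix `σ(a,b)`, representing `⊗ᵢ X^(a i) Z^(b i)`:
`σ(a,b) x y = (-1)^(b⬝x)` if `y = x + a` and `0` otherwise. -/
noncomputable def pauli {p : ℕ} (a b : Fin p → ZMod 2) :
    Matrix (Fin p → ZMod 2) (Fin p → ZMod 2) ℂ :=
  fun x y => if y = x + a then sgn (dotp b x) else 0

/-- The symplectic form `ω((a,b),(c,d)) = a⬝d + b⬝c` on pairs of bitstrings. -/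
def omegaF {p : ℕ} (u v : (Fin p → ZMod 2) × (Fin p → ZMod 2)) : ZMod 2 :=
  dotp u.1 v.2 + dotp u.2 v.1

/-- A subspace is isotropic if `ω` vanishes on all pairs of its elements. -/
def IsIsotropic {p : ℕ}
    (V : Submodule (ZMod 2) ((Fin p → ZMod 2) × (Fin p → ZMod 2))) : Prop :=
  ∀ u ∈ V, ∀ v ∈ V, omegaF u v = 0

/-- A maximal isotropic subspace: isotropic and not properly contained in any
isotropic subspace. -/
def IsMaxIsotropic {p : ℕ}
    (V : Submodule (ZMod 2) ((Fin p → ZMod 2) × (Fin p → ZMod 2))) : Prop :=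
  IsIsotropic V ∧ ∀ W, IsIsotropic W → V ≤ W → W = V

/-! The adjoint of `σ(c,d)` is `±σ(c,d)` and `σ(c,d) σ(e,f) = ±σ(c+e,d+f)`, so the inner product of
the two syndrome states is, up to a sign, the expectation `⟪ψ₀, σ(w) ψ₀⟫` with `w = (c+e,d+f)`.
For `w ∈ V` this is `‖ψ₀‖² ≠ 0`. For `w ∉ V`, maximality of `V` yields `u ∈ V` with `ω(u,w) = 1`,
so `σ(u)` anticommutes with `σ(w)`; as `σ(u)` is unitary and fixes `ψ₀`, the expectation equals
its own negative. -/

lemma star_mulVec_dotProduct_mulVec {m n k R : Type*} [Fintype m] [Fintype n] [Fintype k]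
    [NonUnitalSemiring R] [StarRing R] (A : Matrix m n R) (B : Matrix m k R) (v : n → R)
    (w : k → R) : star (A *ᵥ v) ⬝ᵥ (B *ᵥ w) = star v ⬝ᵥ ((Aᴴ * B) *ᵥ w) := by
  rw [star_mulVec, ← dotProduct_mulVec, mulVec_mulVec]

lemma star_dotProduct_mulVec_eq_zero_of_anticommute {n R : Type*} [Fintype n] [DecidableEq n]
    [Ring R] [StarRing R] [IsAddTorsionFree R] {A B : Matrix n n R} (hA : Aᴴ * A = 1)
    (hAB : B * A = -(A * B)) {v : n → R} (hv : A *ᵥ v = v) : star v ⬝ᵥ (B *ᵥ v) = 0 := by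
  refine self_eq_neg.mp ?_
  calc star v ⬝ᵥ (B *ᵥ v) = star (A *ᵥ v) ⬝ᵥ ((B * A) *ᵥ v) := by rw [← mulVec_mulVec, hv]
    _ = star v ⬝ᵥ ((Aᴴ * (B * A)) *ᵥ v) := star_mulVec_dotProduct_mulVec _ _ _ _
    _ = -(star v ⬝ᵥ (B *ᵥ v)) := by
      rw [hAB, mul_neg, ← mul_assoc, hA, one_mul, neg_mulVec, dotProduct_neg]

lemma sgn_add (s t : ZMod 2) : sgn (s + t) = sgn s * sgn t := by
  rw [sgn, sgn, sgn, ← pow_add, ZMod.val_add, ← neg_one_pow_eq_pow_mod_two]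

lemma sgn_ne_zero (t : ZMod 2) : sgn t ≠ 0 := by
  simp [sgn]

lemma star_sgn (t : ZMod 2) : star (sgn t) = sgn t := by
  simp [sgn]

lemma sgn_one : sgn 1 = -1 := by
  simp [sgn, ZMod.val_one]

lemma sgn_mul_self (t : ZMod 2) : sgn t * sgn t = 1 := by
  rw [← sgn_add, CharTwo.add_self_eq_zero, sgn, ZMod.val_zero, pow_zero]

section

variable {p : ℕ}

lemma dotp_eq_dotProduct (a b : Fin p → ZMod 2) : dotp a b = a ⬝ᵥ b := rfl

lemma omegaF_comm (u v : (Fin p → ZMod 2) × (Fin p → ZMod 2)) :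
    omegaF u v = omegaF v u := by
  simp only [omegaF, dotp_eq_dotProduct, dotProduct_comm u.1, dotProduct_comm u.2, add_comm]

lemma omegaF_add_smul_add_smul (u v w : (Fin p → ZMod 2) × (Fin p → ZMod 2)) (s t : ZMod 2) :
    omegaF (u + s • w) (v + t • w) =
      omegaF u v + t * omegaF u w + s * omegaF v w := by
  simp only [omegaF, dotp_eq_dotProduct, Prod.fst_add, Prod.snd_add, Prod.smul_fst,
    Prod.smul_snd, add_dotProduct, dotProduct_add, smul_dotProduct, dotProduct_smul, smul_eq_mul,
    dotProduct_comm w.1 v.2, dotProduct_comm w.2 v.1, dotProduct_comm w.2 w.1]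
  have two_eq_zero : (2 : ZMod 2) = 0 := rfl
  linear_combination (s * t * w.1 ⬝ᵥ w.2) * two_eq_zero

lemma exists_omegaF_eq_one_of_notMem
    {V : Submodule (ZMod 2) ((Fin p → ZMod 2) × (Fin p → ZMod 2))} (hV : IsMaxIsotropic V)
    {w : (Fin p → ZMod 2) × (Fin p → ZMod 2)} (hw : w ∉ V) :
    ∃ u ∈ V, omegaF u w = 1 := by
  by_contra! hne
  have hperp : ∀ u ∈ V, omegaF u w = 0 :=
    fun u hu => (by decide : ∀ z : ZMod 2, z ≠ 1 → z = 0) _ (hne u hu)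
  have hiso : IsIsotropic (V ⊔ (ZMod 2) ∙ w) := by
    rintro _ hu' _ hv'
    obtain ⟨u, hu, _, hs, rfl⟩ := Submodule.mem_sup.1 hu'
    obtain ⟨v, hv, _, ht, rfl⟩ := Submodule.mem_sup.1 hv'
    obtain ⟨s, rfl⟩ := Submodule.mem_span_singleton.1 hs
    obtain ⟨t, rfl⟩ := Submodule.mem_span_singleton.1 ht
    rw [omegaF_add_smul_add_smul, hV.1 u hu v hv, hperp u hu, hperp v hv]
    ring
  apply hw
  rw [← hV.2 _ hiso le_sup_left]
  exact Submodule.mem_sup_right (Submodule.mem_span_singleton_self w)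

lemma pauli_zero : pauli (0 : Fin p → ZMod 2) 0 = 1 := by
  ext x y
  simp [pauli, one_apply, sgn, dotp, eq_comm]

lemma pauli_mul (a b c d : Fin p → ZMod 2) :
    pauli a b * pauli c d = sgn (dotp d a) • pauli (a + c) (b + d) := by
  ext x z
  simp only [mul_apply, pauli, ite_mul, zero_mul, Finset.sum_ite_eq', Finset.mem_univ, if_true,
    Matrix.smul_apply, smul_eq_mul, add_assoc]
  split_ifs
  · simp only [dotp_eq_dotProduct, dotProduct_add, add_dotProduct, sgn_add]
    ring
  · simp

lemma pauli_conjTranspose (a b : Fin p → ZMod 2) :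
    (pauli a b)ᴴ = sgn (dotp b a) • pauli a b := by
  ext x y
  have hswap : x = y + a ↔ y = x + a := by
    rw [← ZModModule.sub_eq_add, eq_sub_iff_add_eq, eq_comm]
  simp only [conjTranspose_apply, pauli, Matrix.smul_apply, smul_eq_mul, hswap]
  split_ifs with h
  · rw [star_sgn, h, dotp_eq_dotProduct, dotp_eq_dotProduct, dotp_eq_dotProduct, dotProduct_add,
      sgn_add, mul_comm]
  · simp

lemma pauli_conjTranspose_mul (a b c d : Fin p → ZMod 2) :
    (pauli a b)ᴴ * pauli c d = (sgn (dotp b a) * sgn (dotp d a)) • pauli (a + c) (b + d) := by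
  rw [pauli_conjTranspose, smul_mul_assoc, pauli_mul, smul_smul]

lemma pauli_conjTranspose_mul_self (a b : Fin p → ZMod 2) : (pauli a b)ᴴ * pauli a b = 1 := by
  rw [pauli_conjTranspose_mul, sgn_mul_self, one_smul, ZModModule.add_self, ZModModule.add_self,
    pauli_zero]

lemma pauli_mul_comm (u v : (Fin p → ZMod 2) × (Fin p → ZMod 2)) :
    pauli u.1 u.2 * pauli v.1 v.2 = sgn (omegaF u v) • (pauli v.1 v.2 * pauli u.1 u.2) := by
  rw [pauli_mul, pauli_mul, smul_smul, omegaF, sgn_add, add_comm v.1, add_comm v.2, mul_assoc,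
    sgn_mul_self, mul_one, dotp_eq_dotProduct, dotp_eq_dotProduct, dotProduct_comm]

open ComplexOrder in
lemma star_dotProduct_pauli_mulVec_eq_zero_iff
    {V : Submodule (ZMod 2) ((Fin p → ZMod 2) × (Fin p → ZMod 2))} (hV : IsMaxIsotropic V)
    {ψ : (Fin p → ZMod 2) → ℂ} (hψ : ψ ≠ 0) (hstab : ∀ u ∈ V, pauli u.1 u.2 *ᵥ ψ = ψ)
    (w : (Fin p → ZMod 2) × (Fin p → ZMod 2)) :
    star ψ ⬝ᵥ (pauli w.1 w.2 *ᵥ ψ) = 0 ↔ w ∉ V := by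
  refine ⟨fun h hw => hψ ?_, fun hw => ?_⟩
  · rwa [hstab w hw, dotProduct_star_self_eq_zero] at h
  · obtain ⟨u, hu, hω⟩ := exists_omegaF_eq_one_of_notMem hV hw
    refine star_dotProduct_mulVec_eq_zero_of_anticommute (pauli_conjTranspose_mul_self _ _) ?_
      (hstab u hu)
    rw [pauli_mul_comm w u, omegaF_comm, hω, sgn_one, neg_one_smul]

end

theorem syndrome_orthogonal_iff_general {p : ℕ}
    (V : Submodule (ZMod 2) ((Fin p → ZMod 2) × (Fin p → ZMod 2)))
    (hV : IsMaxIsotropic V) (ψ₀ : (Fin p → ZMod 2) → ℂ) (hψ₀ : ψ₀ ≠ 0)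
    (hstab : ∀ u ∈ V, (pauli u.1 u.2).mulVec ψ₀ = ψ₀)
    (c d e f : Fin p → ZMod 2) :
    (∑ x, (starRingEnd ℂ) ((pauli c d).mulVec ψ₀ x) * (pauli e f).mulVec ψ₀ x) = 0 ↔
      (c + e, d + f) ∉ V := by
  have hsyndrome : (∑ x, (starRingEnd ℂ) ((pauli c d).mulVec ψ₀ x) * (pauli e f).mulVec ψ₀ x) =
      (sgn (dotp d c) * sgn (dotp f c)) * (star ψ₀ ⬝ᵥ (pauli (c + e) (d + f) *ᵥ ψ₀)) := by
    change star (pauli c d *ᵥ ψ₀) ⬝ᵥ (pauli e f *ᵥ ψ₀) = _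
    rw [star_mulVec_dotProduct_mulVec, pauli_conjTranspose_mul, smul_mulVec, dotProduct_smul,
      smul_eq_mul]
  rw [hsyndrome, mul_eq_zero, or_iff_right (mul_ne_zero (sgn_ne_zero _) (sgn_ne_zero _))]
  exact star_dotProduct_pauli_mulVec_eq_zero_iff hV hψ₀ hstab (c + e, d + f)

/-- Paper's main Theorem: For a stabilizer state `ψ₀` of a maximal
isotropic subspace `V`, two syndrome states `σ(c,d).mulVec ψ₀` and `σ(e,f).mulVec ψ₀`
are orthogonal iff `(c,d)` and `(e,f)` lie in distinct cosets of `V`, i.e.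
`(c+e, d+f) ∉ V`. -/
theorem syndrome_orthogonal_iff {p : ℕ} (hp : 1 ≤ p)
    (V : Submodule (ZMod 2) ((Fin p → ZMod 2) × (Fin p → ZMod 2)))
    (hV : IsMaxIsotropic V) (ψ₀ : (Fin p → ZMod 2) → ℂ) (hψ₀ : ψ₀ ≠ 0)
    (hstab : ∀ u ∈ V, (pauli u.1 u.2).mulVec ψ₀ = ψ₀)
    (c d e f : Fin p → ZMod 2) :
    (∑ x, (starRingEnd ℂ) ((pauli c d).mulVec ψ₀ x) * (pauli e f).mulVec ψ₀ x) = 0 ↔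
      (c + e, d + f) ∉ V :=
  syndrome_orthogonal_iff_general V hV ψ₀ hψ₀ hstab c d e f
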